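/- arXiv:2101.07782 — 4 statements merged into one kernel-verified Lean document; each statement's English description precedes it below -/
import Mathlib

section
/- Let γ ≥ 1 be a real number and let F_X, F_Y, F_Z : (0,∞) → ℝ≥0 be measurable functions with finite positive essential suprema M_X and M_Y for F_X and F_Y respectively, finite integrals ∫ F_X^γ, ∫ F_Y^γ, and such that for Lebesgue measure λ on ℝ and all s₁, s₂ > 0, λ(L⁺_{F_Z}(s₁+s₂)) ≥ λ(L⁺_{F_X}(s₁)) + λ(L⁺_{F_Y}(s₂)). Then (∫₀^∞ F_Z(t)^γ dt)^{1/(γ+1)} ≥ (∫₀^∞ F_X(t)^γ dt)^{1/(γ+1)} + (∫₀^∞ F_Y(t)^γ dt)^{1/(γ+1)}. -/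
/-!
By the layer-cake formula, `∫ F^γ = γ ∫₀^∞ λ(F ≥ s) s^(γ-1) ds`, and substituting `s ↦ θ s`
scales this by `θ^(-γ)`. Applying the hypothesis with `s₁ = θ s`, `s₂ = (1 - θ) s` and
integrating gives `θ^(-γ) I_X + (1 - θ)^(-γ) I_Y ≤ I_Z`, where `I_• = ∫ F_•^γ`, for every
`θ ∈ (0, 1)`. The choice `θ = a / (a + b)`, where `a = I_X^(1/(γ+1))` and `b = I_Y^(1/(γ+1))`,
makes the left side `(a + b)^(γ+1)`.
-/

open MeasureTheory Set ENNReal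

section LayerCake

variable {α : Type*} [MeasurableSpace α] {μ : Measure α} {γ : ℝ}

lemma ae_ne_top_of_lintegral_rpow_ne_top {F : α → ℝ≥0∞} (hF : AEMeasurable F μ) (hγ : 0 < γ)
    (h : ∫⁻ x, F x ^ γ ∂μ ≠ ⊤) : ∀ᵐ x ∂μ, F x ≠ ⊤ := by
  filter_upwards [ae_lt_top' (hF.pow_const γ) h] with x hx hxtop
  simp [hxtop, ENNReal.top_rpow_of_pos hγ] at hx

lemma rpow_neg_mul_lintegral_rpow_eq_lintegral_meas_const_mul_le_mul {F : α → ℝ≥0∞}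
    (hF : AEMeasurable F μ) (hfin : ∀ᵐ x ∂μ, F x ≠ ⊤) (hγ : 0 < γ) {k : ℝ} (hk : 0 < k) :
    ENNReal.ofReal (k ^ (-γ)) * ∫⁻ x, F x ^ γ ∂μ =
      ENNReal.ofReal γ * ∫⁻ s in Ioi 0,
        μ {x | ENNReal.ofReal (k * s) ≤ F x} * ENNReal.ofReal (s ^ (γ - 1)) := by
  have hlevel (s : ℝ) : μ {x | ENNReal.ofReal (k * s) ≤ F x} = μ {x | s ≤ (F x).toReal / k} := by
    refine measure_congr (Filter.eventuallyEq_set.2 ?_)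
    filter_upwards [hfin] with x hx
    rw [le_div_iff₀ hk, ENNReal.ofReal_le_iff_le_toReal hx, mul_comm]
  simp_rw [hlevel]
  symm
  rw [← lintegral_rpow_eq_lintegral_meas_le_mul μ (ae_of_all _ fun x => by positivity)
    (hF.ennreal_toReal.div_const k) hγ, ← lintegral_const_mul' _ _ ofReal_ne_top]
  refine lintegral_congr_ae ?_
  filter_upwards [hfin] with x hx
  rw [div_eq_mul_inv, Real.mul_rpow toReal_nonneg (by positivity), Real.inv_rpow hk.le,
    ← Real.rpow_neg hk.le, mul_comm, ENNReal.ofReal_mul (by positivity), ENNReal.toReal_rpow,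
    ofReal_toReal (rpow_ne_top_of_nonneg hγ.le hx)]

lemma rpow_neg_mul_lintegral_add_le_of_meas_le {FX FY FZ : α → ℝ≥0∞} (hX : AEMeasurable FX μ)
    (hY : AEMeasurable FY μ) (hZ : AEMeasurable FZ μ) (hfinX : ∀ᵐ x ∂μ, FX x ≠ ⊤)
    (hfinY : ∀ᵐ x ∂μ, FY x ≠ ⊤) (hγ : 0 < γ)
    (hsub : ∀ s₁ s₂ : ℝ, 0 < s₁ → 0 < s₂ →
      μ {x | ENNReal.ofReal s₁ ≤ FX x} + μ {x | ENNReal.ofReal s₂ ≤ FY x} ≤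
        μ {x | ENNReal.ofReal (s₁ + s₂) ≤ FZ x})
    {θ : ℝ} (hθ₀ : 0 < θ) (hθ₁ : θ < 1) :
    ENNReal.ofReal (θ ^ (-γ)) * ∫⁻ x, FX x ^ γ ∂μ +
        ENNReal.ofReal ((1 - θ) ^ (-γ)) * ∫⁻ x, FY x ^ γ ∂μ ≤
      ∫⁻ x, FZ x ^ γ ∂μ := by
  by_cases hIZ : ∫⁻ x, FZ x ^ γ ∂μ = ⊤
  · simp [hIZ]
  have hZ₁ := rpow_neg_mul_lintegral_rpow_eq_lintegral_meas_const_mul_le_mul hZ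
    (ae_ne_top_of_lintegral_rpow_ne_top hZ hγ hIZ) hγ one_pos
  simp only [one_mul, Real.one_rpow, ENNReal.ofReal_one] at hZ₁
  rw [rpow_neg_mul_lintegral_rpow_eq_lintegral_meas_const_mul_le_mul hX hfinX hγ hθ₀,
    rpow_neg_mul_lintegral_rpow_eq_lintegral_meas_const_mul_le_mul hY hfinY hγ (sub_pos.2 hθ₁),
    hZ₁, ← mul_add]
  gcongr
  refine (le_lintegral_add _ _).trans (setLIntegral_mono' measurableSet_Ioi fun s hs => ?_)
  rw [← add_mul]
  gcongr
  simpa [← add_mul] using hsub (θ * s) ((1 - θ) * s) (mul_pos hθ₀ hs)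
    (mul_pos (sub_pos.2 hθ₁) hs)

end LayerCake

lemma rpow_neg_mul_rpow_add_rpow_neg_mul_rpow {a b : ℝ} (ha : 0 < a) (hb : 0 < b) (γ : ℝ) :
    (a / (a + b)) ^ (-γ) * a ^ (γ + 1) + (b / (a + b)) ^ (-γ) * b ^ (γ + 1) =
      (a + b) ^ (γ + 1) := by
  have hab : 0 < a + b := by positivity
  rw [Real.rpow_neg (by positivity), Real.rpow_neg (by positivity), Real.div_rpow ha.le hab.le,
    Real.div_rpow hb.le hab.le, Real.rpow_add_one ha.ne', Real.rpow_add_one hb.ne',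
    Real.rpow_add_one hab.ne']
  have := Real.rpow_pos_of_pos ha γ
  have := Real.rpow_pos_of_pos hb γ
  field_simp

lemma exists_pos_eq_ofReal_rpow {x : ℝ≥0∞} (hx₀ : x ≠ 0) (hx : x ≠ ⊤) {q : ℝ} (hq : q ≠ 0) :
    ∃ a : ℝ, 0 < a ∧ x = ENNReal.ofReal a ^ q := by
  have hx' : x ^ q⁻¹ ≠ ⊤ := by simp [hx, hx₀]
  exact ⟨(x ^ q⁻¹).toReal, ENNReal.toReal_pos (by simp [hx₀, hx]) hx',
    by rw [ofReal_toReal hx', ENNReal.rpow_inv_rpow hq]⟩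

lemma rpow_one_div_add_le_of_forall_rpow_neg_mul_add_le {γ : ℝ} (hγ : 0 ≤ γ) {A B C : ℝ≥0∞}
    (h : ∀ θ : ℝ, 0 < θ → θ < 1 →
      ENNReal.ofReal (θ ^ (-γ)) * A + ENNReal.ofReal ((1 - θ) ^ (-γ)) * B ≤ C) :
    A ^ (1 / (γ + 1)) + B ^ (1 / (γ + 1)) ≤ C ^ (1 / (γ + 1)) := by
  have hp : 0 < 1 / (γ + 1) := by positivity
  have hhalf : 1 ≤ ENNReal.ofReal ((1 / 2 : ℝ) ^ (-γ)) :=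
    ENNReal.one_le_ofReal.2 (Real.one_le_rpow_of_pos_of_le_one_of_nonpos (by norm_num)
      (by norm_num) (neg_nonpos.2 hγ))
  -- `θ = 1/2` gives `A, B ≤ C`, which settles the degenerate cases.
  have hsum := h (1 / 2) (by norm_num) (by norm_num)
  rw [show (1 : ℝ) - 1 / 2 = 1 / 2 by norm_num] at hsum
  have hAC : A ≤ C := (le_mul_of_one_le_left' hhalf).trans (le_self_add.trans hsum)
  have hBC : B ≤ C := (le_mul_of_one_le_left' hhalf).trans (le_add_self.trans hsum)
  rcases eq_or_ne A 0 with rfl | hA₀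
  · rw [ENNReal.zero_rpow_of_pos hp, zero_add]
    exact ENNReal.rpow_le_rpow hBC hp.le
  rcases eq_or_ne B 0 with rfl | hB₀
  · rw [ENNReal.zero_rpow_of_pos hp, add_zero]
    exact ENNReal.rpow_le_rpow hAC hp.le
  rcases eq_or_ne C ⊤ with rfl | hC
  · rw [ENNReal.top_rpow_of_pos hp]
    exact le_top
  have hq : γ + 1 ≠ 0 := by positivity
  obtain ⟨a, ha, rfl⟩ := exists_pos_eq_ofReal_rpow hA₀ (ne_top_of_le_ne_top hC hAC) hq
  obtain ⟨b, hb, rfl⟩ := exists_pos_eq_ofReal_rpow hB₀ (ne_top_of_le_ne_top hC hBC) hq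
  have hθ := h (a / (a + b)) (by positivity) ((div_lt_one (by positivity)).2 (by linarith))
  rw [show 1 - a / (a + b) = b / (a + b) by field_simp; ring, ofReal_rpow_of_pos ha,
    ofReal_rpow_of_pos hb, ← ENNReal.ofReal_mul (by positivity),
    ← ENNReal.ofReal_mul (by positivity), ← ENNReal.ofReal_add (by positivity) (by positivity),
    rpow_neg_mul_rpow_add_rpow_neg_mul_rpow ha hb, ← ofReal_rpow_of_pos (by positivity)] at hθ
  rw [one_div, ENNReal.rpow_rpow_inv hq, ENNReal.rpow_rpow_inv hq,
    ← ENNReal.ofReal_add ha.le hb.le, ← ENNReal.rpow_rpow_inv hq (ENNReal.ofReal (a + b))]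
  exact ENNReal.rpow_le_rpow hθ (by positivity)

theorem stmt9_general (γ : ℝ) (hγ : 1 ≤ γ) (FX FY FZ : ℝ → ENNReal)
    (hmX : Measurable FX) (hmY : Measurable FY) (hmZ : Measurable FZ)
    (hIX : ∫⁻ t in Set.Ioi (0 : ℝ), FX t ^ γ ≠ ⊤)
    (hIY : ∫⁻ t in Set.Ioi (0 : ℝ), FY t ^ γ ≠ ⊤)
    (hsub : ∀ s₁ s₂ : ℝ, 0 < s₁ → 0 < s₂ →
      volume {t ∈ Set.Ioi (0 : ℝ) | ENNReal.ofReal s₁ ≤ FX t} +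
        volume {t ∈ Set.Ioi (0 : ℝ) | ENNReal.ofReal s₂ ≤ FY t} ≤
      volume {t ∈ Set.Ioi (0 : ℝ) | ENNReal.ofReal (s₁ + s₂) ≤ FZ t}) :
    (∫⁻ t in Set.Ioi (0 : ℝ), FX t ^ γ) ^ (1 / (γ + 1)) +
      (∫⁻ t in Set.Ioi (0 : ℝ), FY t ^ γ) ^ (1 / (γ + 1)) ≤
    (∫⁻ t in Set.Ioi (0 : ℝ), FZ t ^ γ) ^ (1 / (γ + 1)) := by
  have hγ₀ : 0 < γ := by linarith
  have hlevel (F : ℝ → ℝ≥0∞) (s : ℝ) :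
      volume {t ∈ Ioi (0 : ℝ) | ENNReal.ofReal s ≤ F t} =
        volume.restrict (Ioi 0) {t | ENNReal.ofReal s ≤ F t} := by
    rw [Measure.restrict_apply' measurableSet_Ioi, inter_comm]
    rfl
  refine rpow_one_div_add_le_of_forall_rpow_neg_mul_add_le hγ₀.le fun θ hθ₀ hθ₁ => ?_
  refine rpow_neg_mul_lintegral_add_le_of_meas_le hmX.aemeasurable hmY.aemeasurable
    hmZ.aemeasurable (ae_ne_top_of_lintegral_rpow_ne_top hmX.aemeasurable hγ₀ hIX)
    (ae_ne_top_of_lintegral_rpow_ne_top hmY.aemeasurable hγ₀ hIY) hγ₀ (fun s₁ s₂ h₁ h₂ => ?_)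
    hθ₀ hθ₁
  simpa only [hlevel] using hsub s₁ s₂ h₁ h₂

/-- The 'spillover' lemma: if superlevel-set measures of `F_Z` dominate the sums of those
of `F_X` and `F_Y`, then the `1/(γ+1)`-th powers of the integrals of the `γ`-th powers
are superadditive. -/
theorem stmt9 (γ : ℝ) (hγ : 1 ≤ γ) (FX FY FZ : ℝ → ENNReal)
    (hmX : Measurable FX) (hmY : Measurable FY) (hmZ : Measurable FZ)
    (MX MY : ENNReal)
    (hMX : essSup FX (volume.restrict (Set.Ioi (0 : ℝ))) = MX)
    (hMX0 : 0 < MX) (hMXtop : MX ≠ ⊤)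
    (hMY : essSup FY (volume.restrict (Set.Ioi (0 : ℝ))) = MY)
    (hMY0 : 0 < MY) (hMYtop : MY ≠ ⊤)
    (hIX : ∫⁻ t in Set.Ioi (0 : ℝ), FX t ^ γ ≠ ⊤)
    (hIY : ∫⁻ t in Set.Ioi (0 : ℝ), FY t ^ γ ≠ ⊤)
    (hsub : ∀ s₁ s₂ : ℝ, 0 < s₁ → 0 < s₂ →
      volume {t ∈ Set.Ioi (0 : ℝ) | ENNReal.ofReal s₁ ≤ FX t} +
        volume {t ∈ Set.Ioi (0 : ℝ) | ENNReal.ofReal s₂ ≤ FY t} ≤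
      volume {t ∈ Set.Ioi (0 : ℝ) | ENNReal.ofReal (s₁ + s₂) ≤ FZ t}) :
    (∫⁻ t in Set.Ioi (0 : ℝ), FX t ^ γ) ^ (1 / (γ + 1)) +
      (∫⁻ t in Set.Ioi (0 : ℝ), FY t ^ γ) ^ (1 / (γ + 1)) ≤
    (∫⁻ t in Set.Ioi (0 : ℝ), FZ t ^ γ) ^ (1 / (γ + 1)) :=
  stmt9_general γ hγ FX FY FZ hmX hmY hmZ hIX hIY hsub
end

section
/- Let G be a unimodular locally compact group with Haar measure μ and let G' be an open subgroup of G. Suppose n ≥ 1 is an integer such that for all compact A, B ⊆ G' of positive measure, μ(AB)^{1/n} ≥ μ(A)^{1/n} + μ(B)^{1/n}. Then the same inequality holds for all compact X, Y ⊆ G of positive measure: μ(XY)^{1/n} ≥ μ(X)^{1/n} + μ(Y)^{1/n}. -/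
/-!
Cut `X` along the left cosets `gH` of the open subgroup `H` into finitely many compact pieces
`X_g`, and let `B ⊆ H` be a right translate of a piece of `Y` lying in a single right coset of
`H`. The sets `X_g * B` lie in distinct left cosets, so `∑ μ (X_g * B) ≤ μ (X * Y)`, and each
term is at least `(μ X_g ^ (1/n) + μ B ^ (1/n)) ^ n` by the inequality in `H` after a left
translation. If `μ X_g / μ X ≤ μ B / μ Y` for every `g`, that term is at least
`μ X_g * (μ X ^ (1/n) + μ Y ^ (1/n)) ^ n / μ X`, and summing over `g` gives the inequality.
Taking the largest piece of `X` and the largest piece of `Y`, this ratio condition holds for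
`(X, Y)` or for `(Y⁻¹, X⁻¹)`; in the second case unimodularity (`μ S⁻¹ = μ S`) carries the
inequality back.
-/

open MeasureTheory Pointwise
open scoped ENNReal NNReal

def BrunnMinkowskiOn {G : Type*} [Mul G] [TopologicalSpace G] [MeasurableSpace G]
    (μ : Measure G) (n : ℕ) (S : Set G) : Prop :=
  ∀ A B : Set G, IsCompact A → IsCompact B → A ⊆ S → B ⊆ S → 0 < μ A → 0 < μ B →
    μ A ^ ((1 : ℝ) / n) + μ B ^ ((1 : ℝ) / n) ≤ μ (A * B) ^ ((1 : ℝ) / n)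

theorem ENNReal.mul_rpow_add_rpow_pow_le {n : ℕ} (hn : n ≠ 0) {a b c x y : ℝ≥0∞}
    (habc : a ^ ((1 : ℝ) / n) + b ^ ((1 : ℝ) / n) ≤ c ^ ((1 : ℝ) / n)) (hab : a * y ≤ b * x) :
    a * (x ^ ((1 : ℝ) / n) + y ^ ((1 : ℝ) / n)) ^ n ≤ c * x := by
  have hpow (z : ℝ≥0∞) : (z ^ ((1 : ℝ) / n)) ^ n = z := by
    rw [one_div, ENNReal.rpow_inv_natCast_pow hn]
  have hroot : a ^ ((1 : ℝ) / n) * y ^ ((1 : ℝ) / n) ≤ b ^ ((1 : ℝ) / n) * x ^ ((1 : ℝ) / n) := by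
    simpa only [ENNReal.mul_rpow_of_nonneg _ _ (by positivity : (0 : ℝ) ≤ 1 / n)] using
      ENNReal.rpow_le_rpow hab (by positivity : (0 : ℝ) ≤ 1 / n)
  calc a * (x ^ ((1 : ℝ) / n) + y ^ ((1 : ℝ) / n)) ^ n
      = (a ^ ((1 : ℝ) / n) * x ^ ((1 : ℝ) / n) + a ^ ((1 : ℝ) / n) * y ^ ((1 : ℝ) / n)) ^ n := by
        rw [← mul_add, mul_pow, hpow]
    _ ≤ ((a ^ ((1 : ℝ) / n) + b ^ ((1 : ℝ) / n)) * x ^ ((1 : ℝ) / n)) ^ n := by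
        rw [add_mul]; gcongr
    _ ≤ (c ^ ((1 : ℝ) / n) * x ^ ((1 : ℝ) / n)) ^ n := by gcongr
    _ = c * x := by rw [mul_pow, hpow, hpow]

theorem MeasureTheory.sum_measure_inter_le {α ι : Type*} [MeasurableSpace α] (μ : Measure α)
    (s : Set α) {T : Finset ι} {F : ι → Set α} (hF : ∀ i ∈ T, MeasurableSet (F i))
    (hFd : Set.PairwiseDisjoint ↑T F) : ∑ i ∈ T, μ (F i ∩ s) ≤ μ s :=
  calc ∑ i ∈ T, μ (F i ∩ s) = ∑ i ∈ T, μ.restrict s (F i) :=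
        Finset.sum_congr rfl fun i hi => (Measure.restrict_apply (hF i hi)).symm
    _ ≤ μ.restrict s Set.univ :=
        sum_measure_le_measure_univ (fun i hi => (hF i hi).nullMeasurableSet)
          fun _ hi _ hj hij => (hFd hi hj hij).aedisjoint
    _ = μ s := Measure.restrict_apply_univ s

section Group

variable {G : Type*} [Group G] {H : Subgroup G}

theorem QuotientGroup.mem_preimage_mk_singleton_iff {q : G ⧸ H} {x : G} :
    x ∈ QuotientGroup.mk ⁻¹' {q} ↔ q.out⁻¹ * x ∈ H := by
  conv_lhs => rw [Set.mem_preimage, Set.mem_singleton_iff, ← QuotientGroup.out_eq' q, eq_comm]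
  exact QuotientGroup.eq

theorem MeasureTheory.measure_le_sum_measure_inter_preimage_mk [MeasurableSpace G]
    (μ : Measure G) {Z : Set G} {T : Finset (G ⧸ H)}
    (hT : QuotientGroup.mk '' Z ⊆ (T : Set (G ⧸ H))) :
    μ Z ≤ ∑ q ∈ T, μ (Z ∩ QuotientGroup.mk ⁻¹' {q}) :=
  calc μ Z ≤ μ (⋃ q ∈ T, Z ∩ QuotientGroup.mk ⁻¹' {q}) :=
        measure_mono fun z hz => Set.mem_biUnion (hT ⟨z, hz, rfl⟩) ⟨hz, rfl⟩
    _ ≤ _ := measure_biUnion_finset_le T _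

variable [TopologicalSpace G] [IsTopologicalGroup G]

theorem IsCompact.finite_image_quotientMk (hH : IsOpen (H : Set G)) {Z : Set G}
    (hZ : IsCompact Z) : (QuotientGroup.mk '' Z : Set (G ⧸ H)).Finite :=
  haveI := QuotientGroup.discreteTopology hH
  (hZ.image continuous_quotient_mk').finite_of_discrete

theorem IsCompact.inter_preimage_mk_singleton (hH : IsOpen (H : Set G)) {Z : Set G}
    (hZ : IsCompact Z) (q : G ⧸ H) : IsCompact (Z ∩ QuotientGroup.mk ⁻¹' {q}) :=
  haveI := QuotientGroup.discreteTopology hH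
  hZ.inter_right ((isClosed_discrete _).preimage continuous_quotient_mk')

variable [MeasurableSpace G] (μ : Measure G)

theorem MeasureTheory.exists_max_measure_inter_preimage_mk (hH : IsOpen (H : Set G))
    {Z : Set G} (hZ : IsCompact Z) (hZpos : 0 < μ Z) :
    ∃ q₀ : G ⧸ H, 0 < μ (Z ∩ QuotientGroup.mk ⁻¹' {q₀}) ∧
      ∀ q : G ⧸ H, μ (Z ∩ QuotientGroup.mk ⁻¹' {q}) ≤ μ (Z ∩ QuotientGroup.mk ⁻¹' {q₀}) := by
  have hfin := hZ.finite_image_quotientMk hH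
  obtain ⟨q₀, -, hq₀⟩ := Set.exists_max_image _ (fun q => μ (Z ∩ QuotientGroup.mk ⁻¹' {q}))
    hfin ((nonempty_of_measure_ne_zero hZpos.ne').image _)
  have hmax (q : G ⧸ H) :
      μ (Z ∩ QuotientGroup.mk ⁻¹' {q}) ≤ μ (Z ∩ QuotientGroup.mk ⁻¹' {q₀}) := by
    by_cases hq : q ∈ QuotientGroup.mk '' Z
    · exact hq₀ q hq
    · have hempty : Z ∩ QuotientGroup.mk ⁻¹' {q} = ∅ :=
        Set.eq_empty_of_forall_notMem fun z hz => hq ⟨z, hz.1, hz.2⟩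
      simp [hempty]
  refine ⟨q₀, pos_iff_ne_zero.2 fun h0 => hZpos.ne' ?_, hmax⟩
  have hcover : μ Z ≤ ∑ q ∈ hfin.toFinset, μ (Z ∩ QuotientGroup.mk ⁻¹' {q}) :=
    measure_le_sum_measure_inter_preimage_mk μ (by simp)
  rwa [Finset.sum_eq_zero fun q _ => nonpos_iff_eq_zero.1 (h0 ▸ hmax q),
    nonpos_iff_eq_zero] at hcover

theorem BrunnMinkowskiOn.of_subset_coset {μ : Measure G} [μ.IsMulLeftInvariant] {n : ℕ}
    (hBM : BrunnMinkowskiOn μ n H) {q : G ⧸ H} {A B : Set G} (hA : IsCompact A)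
    (hB : IsCompact B) (hAq : A ⊆ QuotientGroup.mk ⁻¹' {q}) (hBH : B ⊆ H) (hApos : 0 < μ A)
    (hBpos : 0 < μ B) :
    μ A ^ ((1 : ℝ) / n) + μ B ^ ((1 : ℝ) / n) ≤ μ (A * B) ^ ((1 : ℝ) / n) := by
  have hAH : q.out⁻¹ • A ⊆ H := by
    rintro _ ⟨a, ha, rfl⟩
    exact QuotientGroup.mem_preimage_mk_singleton_iff.1 (hAq ha)
  have := hBM _ B (hA.smul _) hB hAH hBH (by rwa [measure_smul]) hBpos
  rwa [measure_smul, smul_mul_assoc, measure_smul] at this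

variable [BorelSpace G]

theorem MeasureTheory.measure_mul_singleton [μ.IsMulRightInvariant] (s : Set G) (g : G) :
    μ (s * {g}) = μ s := by
  rw [Set.mul_singleton, Set.image_mul_right, measure_preimage_mul_right]

theorem MeasureTheory.sum_measure_preimage_mk_inter_le (hH : IsOpen (H : Set G)) (Z : Set G)
    (T : Finset (G ⧸ H)) : ∑ q ∈ T, μ (QuotientGroup.mk ⁻¹' {q} ∩ Z) ≤ μ Z :=
  haveI := QuotientGroup.discreteTopology hH
  sum_measure_inter_le μ Z
    (fun _ _ => ((isOpen_discrete _).preimage continuous_quotient_mk').measurableSet)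
    fun _ _ _ _ hqq' => (Set.disjoint_singleton.2 hqq').preimage _

theorem MeasureTheory.measure_inv_of_isCompact [LocallyCompactSpace G] [μ.IsHaarMeasure]
    [μ.IsMulRightInvariant] {S : Set G} (hS : IsCompact S) : μ S⁻¹ = μ S := by
  set c : ℝ≥0 := μ.inv.haarScalarFactor μ
  have key {K : Set G} (hK : IsCompact K) : μ K⁻¹ = c * μ K := by
    rw [← Measure.inv_apply]
    exact Measure.measure_isMulInvariant_eq_smul_of_isCompact_closure μ.inv μ hK.closure
  obtain ⟨K⟩ : Nonempty (TopologicalSpace.PositiveCompacts G) := inferInstance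
  have hK : μ K = (c * c : ℝ≥0) * μ K := by
    conv_lhs => rw [← inv_inv (K : Set G)]
    rw [key K.isCompact.inv, key K.isCompact, ENNReal.coe_mul, mul_assoc]
  have hcc : c * c = 1 := by
    have := (ENNReal.mul_left_inj (μ.measure_pos_of_nonempty_interior K.interior_nonempty).ne'
      K.isCompact.measure_lt_top.ne).1 (hK.symm.trans (one_mul _).symm)
    exact_mod_cast this
  have hc : c = 1 := (pow_eq_one_iff_of_nonneg (zero_le : 0 ≤ c) two_ne_zero).1 (by rw [sq, hcc])
  rw [key hS, hc, ENNReal.coe_one, one_mul]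

variable {μ} {n : ℕ}

theorem BrunnMinkowskiOn.rpow_add_rpow_le_measure_mul [μ.IsMulLeftInvariant]
    (hH : IsOpen (H : Set G)) (hn : n ≠ 0) (hBM : BrunnMinkowskiOn μ n H) {X B : Set G}
    (hX : IsCompact X) (hB : IsCompact B) (hBH : B ⊆ H) (hXpos : 0 < μ X) (hXfin : μ X ≠ ⊤)
    (hBpos : 0 < μ B) {y : ℝ≥0∞}
    (hy : ∀ q : G ⧸ H, μ (X ∩ QuotientGroup.mk ⁻¹' {q}) * y ≤ μ B * μ X) :
    μ X ^ ((1 : ℝ) / n) + y ^ ((1 : ℝ) / n) ≤ μ (X * B) ^ ((1 : ℝ) / n) := by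
  set s := μ X ^ ((1 : ℝ) / n) + y ^ ((1 : ℝ) / n)
  have hpiece (q : G ⧸ H) : μ (X ∩ QuotientGroup.mk ⁻¹' {q}) * s ^ n ≤
      μ (QuotientGroup.mk ⁻¹' {q} ∩ (X * B)) * μ X := by
    rcases eq_or_ne (μ (X ∩ QuotientGroup.mk ⁻¹' {q})) 0 with h0 | h0
    · simp [h0]
    refine ENNReal.mul_rpow_add_rpow_pow_le hn ?_ (hy q)
    have hsub : (X ∩ QuotientGroup.mk ⁻¹' {q}) * B ⊆ QuotientGroup.mk ⁻¹' {q} ∩ (X * B) := by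
      rintro _ ⟨x, ⟨hxX, hxq⟩, b, hb, rfl⟩
      exact ⟨(QuotientGroup.mk_mul_of_mem x (hBH hb)).trans hxq, Set.mul_mem_mul hxX hb⟩
    calc _ ≤ μ ((X ∩ QuotientGroup.mk ⁻¹' {q}) * B) ^ ((1 : ℝ) / n) :=
          hBM.of_subset_coset (hX.inter_preimage_mk_singleton hH q) hB Set.inter_subset_right hBH
            (pos_iff_ne_zero.2 h0) hBpos
      _ ≤ _ := by gcongr
  set T := (hX.finite_image_quotientMk hH).toFinset
  have hsum : μ X * s ^ n ≤ μ (X * B) * μ X :=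
    calc μ X * s ^ n ≤ (∑ q ∈ T, μ (X ∩ QuotientGroup.mk ⁻¹' {q})) * s ^ n := by
          gcongr; exact measure_le_sum_measure_inter_preimage_mk μ (by simp [T])
      _ ≤ (∑ q ∈ T, μ (QuotientGroup.mk ⁻¹' {q} ∩ (X * B))) * μ X := by
          simp only [Finset.sum_mul]; exact Finset.sum_le_sum fun q _ => hpiece q
      _ ≤ μ (X * B) * μ X := by gcongr; exact sum_measure_preimage_mk_inter_le μ hH _ T
  rw [mul_comm] at hsum
  have hpow : s ^ n ≤ μ (X * B) := (ENNReal.mul_le_mul_iff_left hXpos.ne' hXfin).1 hsum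
  calc s = (s ^ n) ^ ((1 : ℝ) / n) := by rw [one_div, ENNReal.pow_rpow_inv_natCast hn]
    _ ≤ _ := by gcongr

theorem BrunnMinkowskiOn.rpow_add_rpow_le_of_forall_mul_le [LocallyCompactSpace G]
    [μ.IsHaarMeasure] [μ.IsMulRightInvariant] (hH : IsOpen (H : Set G)) (hn : n ≠ 0)
    (hBM : BrunnMinkowskiOn μ n H) {X Y : Set G} (hX : IsCompact X) (hY : IsCompact Y)
    (hXpos : 0 < μ X) {q₀ : G ⧸ H} (hq₀pos : 0 < μ (Y⁻¹ ∩ QuotientGroup.mk ⁻¹' {q₀}))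
    (hq₀ : ∀ q : G ⧸ H, μ (X ∩ QuotientGroup.mk ⁻¹' {q}) * μ Y ≤
      μ (Y⁻¹ ∩ QuotientGroup.mk ⁻¹' {q₀}) * μ X) :
    μ X ^ ((1 : ℝ) / n) + μ Y ^ ((1 : ℝ) / n) ≤ μ (X * Y) ^ ((1 : ℝ) / n) := by
  set P := Y⁻¹ ∩ QuotientGroup.mk ⁻¹' {q₀}
  have hP : IsCompact P := hY.inv.inter_preimage_mk_singleton hH q₀
  -- `P⁻¹ ⊆ Y` lies in the right coset `H * {q₀.out⁻¹}`, and `B` is its translate into `H`.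
  set B := P⁻¹ * {q₀.out}
  have hBH : B ⊆ H := by
    rintro _ ⟨p, hp, _, rfl, rfl⟩
    simpa using H.inv_mem (QuotientGroup.mem_preimage_mk_singleton_iff.1 hp.2)
  have hμB : μ B = μ P := by rw [measure_mul_singleton, measure_inv_of_isCompact μ hP]
  have hBY : B * {q₀.out⁻¹} ⊆ Y := by
    rw [mul_assoc, Set.singleton_mul_singleton, mul_inv_cancel, Set.singleton_one, mul_one]
    exact Set.inv_subset.2 Set.inter_subset_left
  calc μ X ^ ((1 : ℝ) / n) + μ Y ^ ((1 : ℝ) / n) ≤ μ (X * B) ^ ((1 : ℝ) / n) :=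
        hBM.rpow_add_rpow_le_measure_mul hH hn hX (hP.inv.mul isCompact_singleton) hBH hXpos
          hX.measure_lt_top.ne (hμB ▸ hq₀pos) fun q => hμB ▸ hq₀ q
    _ = μ (X * B * {q₀.out⁻¹}) ^ ((1 : ℝ) / n) := by rw [measure_mul_singleton]
    _ ≤ μ (X * Y) ^ ((1 : ℝ) / n) := by
        rw [mul_assoc]
        exact ENNReal.rpow_le_rpow (measure_mono (Set.mul_subset_mul_left hBY)) (by positivity)

theorem BrunnMinkowskiOn.univ_of_isOpen [LocallyCompactSpace G] [μ.IsHaarMeasure]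
    [μ.IsMulRightInvariant] (hH : IsOpen (H : Set G)) (hn : n ≠ 0)
    (hBM : BrunnMinkowskiOn μ n H) : BrunnMinkowskiOn μ n Set.univ := by
  intro X Y hX hY _ _ hXpos hYpos
  have hinv {S : Set G} (hS : IsCompact S) : μ S⁻¹ = μ S := measure_inv_of_isCompact μ hS
  obtain ⟨qX, hqXpos, hqX⟩ := exists_max_measure_inter_preimage_mk μ hH hX hXpos
  obtain ⟨qY, hqYpos, hqY⟩ :=
    exists_max_measure_inter_preimage_mk μ hH hY.inv (by rwa [hinv hY])
  rcases le_total (μ (X ∩ QuotientGroup.mk ⁻¹' {qX}) * μ Y)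
      (μ (Y⁻¹ ∩ QuotientGroup.mk ⁻¹' {qY}) * μ X) with h | h
  · exact hBM.rpow_add_rpow_le_of_forall_mul_le hH hn hX hY hXpos hqYpos fun q =>
      (mul_le_mul_left (hqX q) _).trans h
  · have := hBM.rpow_add_rpow_le_of_forall_mul_le hH hn hY.inv hX.inv (by rwa [hinv hY])
      (q₀ := qX) (by rwa [inv_inv]) fun q => by
        rw [inv_inv, hinv hX, hinv hY]
        exact (mul_le_mul_left (hqY q) _).trans h
    rwa [← mul_inv_rev, hinv (hX.mul hY), hinv hX, hinv hY, add_comm] at this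

end Group

/-- If a unimodular locally compact group `G` has an open subgroup `G'` satisfying the
Brunn–Minkowski inequality with exponent `n ≥ 1`, then `G` satisfies the Brunn–Minkowski
inequality with exponent `n`. -/
theorem stmt12 {G : Type*} [Group G] [TopologicalSpace G] [IsTopologicalGroup G]
    [LocallyCompactSpace G] [MeasurableSpace G] [BorelSpace G]
    (μ : Measure G) [μ.IsHaarMeasure] [μ.IsMulRightInvariant]
    (G' : Subgroup G) (hG' : IsOpen (G' : Set G))
    (n : ℕ) (hn : 1 ≤ n)
    (hBM : ∀ A B : Set G, IsCompact A → IsCompact B →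
      A ⊆ (G' : Set G) → B ⊆ (G' : Set G) → 0 < μ A → 0 < μ B →
      μ A ^ ((1 : ℝ) / n) + μ B ^ ((1 : ℝ) / n) ≤ μ (A * B) ^ ((1 : ℝ) / n)) :
    ∀ X Y : Set G, IsCompact X → IsCompact Y → 0 < μ X → 0 < μ Y →
      μ X ^ ((1 : ℝ) / n) + μ Y ^ ((1 : ℝ) / n) ≤ μ (X * Y) ^ ((1 : ℝ) / n) :=
  fun X Y hX hY => BrunnMinkowskiOn.univ_of_isOpen hG' (by omega) hBM X Y hX hY
    (Set.subset_univ X) (Set.subset_univ Y)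
end

section
/- Let G be a locally compact group and π : G → (ℝ>0, ×) a continuous group homomorphism. Then exactly one of the following holds: (1) π is a surjective open map, so that 1 → ker π → G → ℝ>0 → 1 is a short exact sequence of topological groups; or (2) ker π is an open subgroup of G. -/
/-!
If `ker π` is open, `π` maps it onto `{1}`, which is not open in `ℝ>0`. Otherwise pass to
`Q = G ⧸ ker π`: it is locally compact and not discrete, and `π` induces an injective continuous
`ψ : Q → ℝ>0`. For a compact neighbourhood `K` of `1`, the image of the compact set
`K * K \ interior K` misses `1`, so for some `c > 1` every element of `K * K` with value in
`[1, c)` already lies in `K`. Hence for `g ∈ K` with `ψ g > 1` the powers `g ^ n` stay in `K` as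
long as `ψ g ^ n < c`. Non-discreteness gives such `g` with `ψ g` arbitrarily close to `1`, so the
compact set `ψ '' K` is dense in, hence contains, `[1, c)`; applied to `ψ⁻¹` as well, this makes
`ψ '' K` a neighbourhood of `1`. So `ψ` is open, and its range is an open subgroup of the connected
group `ℝ>0`, i.e. all of it.
-/

open Set Filter Topology Function
open scoped Pointwise

local notation "ℝ>0" => {x : ℝ // 0 < x}

-- Via `LinearOrderedCommGroup.toIsTopologicalGroup`, this makes `ℝ>0` a topological group.
instance : OrderTopology ℝ>0 := orderTopology_of_ordConnected (t := Ioi 0)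

instance : Nontrivial ℝ>0 := ⟨⟨1, ⟨2, two_pos⟩, fun h => by simpa using congrArg Subtype.val h⟩⟩

instance : ConnectedSpace ℝ>0 := Subtype.connectedSpace isConnected_Ioi

theorem Continuous.exists_mem_nhds_inter_preimage_subset {X Y : Type*} [TopologicalSpace X]
    [TopologicalSpace Y] [T2Space Y] {f : X → Y} (hf : Continuous f) (hinj : Injective f)
    {L K : Set X} (hL : IsCompact L) {x : X} (hK : K ∈ 𝓝 x) :
    ∃ U ∈ 𝓝 (f x), L ∩ f ⁻¹' U ⊆ K := by
  refine ⟨(f '' (L \ interior K))ᶜ,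
    ((hL.diff isOpen_interior).image hf).isClosed.isOpen_compl.mem_nhds ?_, ?_⟩
  · rintro ⟨w, hw, hwx⟩
    exact hw.2 (hinj hwx ▸ mem_interior_iff_mem_nhds.2 hK)
  · rintro w ⟨hwL, hwU⟩
    by_contra hwK
    exact hwU ⟨w, ⟨hwL, fun hw => hwK (interior_subset hw)⟩, rfl⟩

theorem MonoidHom.pow_mem_of_mul_mem {Q M : Type*} [Monoid Q] [Monoid M] [Preorder M]
    [MulLeftMono M] (ψ : Q →* M) {K : Set Q} {c : M} (h1 : (1 : Q) ∈ K)
    (hK : ∀ w ∈ K * K, ψ w ∈ Ico 1 c → w ∈ K) {g : Q} (hg : g ∈ K) (hψg : 1 ≤ ψ g) :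
    ∀ n : ℕ, ψ g ^ n < c → g ^ n ∈ K
  | 0, _ => by simpa using h1
  | n + 1, hn => by
    have hgn : g ^ n ∈ K :=
      pow_mem_of_mul_mem ψ h1 hK hg hψg n ((pow_le_pow_right' hψg n.le_succ).trans_lt hn)
    refine hK _ (pow_succ g n ▸ mul_mem_mul hgn hg) ⟨?_, ?_⟩ <;> rw [map_pow]
    exacts [one_le_pow_of_one_le' hψg _, hn]

theorem MonoidHom.exists_mem_one_lt_lt {Q M : Type*} [Group Q] [TopologicalSpace Q]
    [IsTopologicalGroup Q] [(𝓝[≠] (1 : Q)).NeBot] [CommGroup M] [LinearOrder M]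
    [IsOrderedMonoid M] [TopologicalSpace M] [OrderTopology M] {ψ : Q →* M}
    (hψ : Continuous ψ) (hinj : Injective ψ) {K : Set Q} (hK : K ∈ 𝓝 1) {u : M} (hu : 1 < u) :
    ∃ g ∈ K, 1 < ψ g ∧ ψ g < u := by
  have hV : K ∩ K⁻¹ ∩ ψ ⁻¹' Ioo u⁻¹ u ∈ 𝓝 1 :=
    inter_mem (inter_mem hK (inv_mem_nhds_one Q hK)) <|
      hψ.continuousAt.preimage_mem_nhds (map_one ψ ▸ Ioo_mem_nhds (inv_lt_one'.2 hu) hu)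
  obtain ⟨q, hq1, ⟨hqK, hqK'⟩, hqu, hqu'⟩ :=
    Filter.nonempty_of_mem (inter_mem_nhdsWithin {1}ᶜ hV)
  rcases ((map_ne_one_iff ψ hinj).2 hq1).lt_or_gt with hlt | hgt
  · refine ⟨q⁻¹, hqK', ?_, ?_⟩ <;> rw [map_inv]
    exacts [one_lt_inv'.2 hlt, inv_lt'.1 hqu]
  · exact ⟨q, hqK, hgt, hqu'⟩

theorem MonoidHom.exists_Ico_one_subset_image {Q : Type*} [Group Q] [TopologicalSpace Q]
    [IsTopologicalGroup Q] [(𝓝[≠] (1 : Q)).NeBot] {ψ : Q →* ℝ>0} (hψ : Continuous ψ)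
    (hinj : Injective ψ) {K : Set Q} (hKc : IsCompact K) (hK : K ∈ 𝓝 1) :
    ∃ c, 1 < c ∧ Ico 1 c ⊆ ψ '' K := by
  obtain ⟨U, hU, hUK⟩ := hψ.exists_mem_nhds_inter_preimage_subset hinj (hKc.mul hKc) hK
  obtain ⟨c, hc, hcU⟩ := exists_Ico_subset_of_mem_nhds (map_one ψ ▸ hU) (exists_gt 1)
  have hKK : ∀ w ∈ K * K, ψ w ∈ Ico 1 c → w ∈ K := fun w hw hwc => hUK ⟨hw, hcU hwc⟩
  refine ⟨c, hc, fun x hx => (hKc.image hψ).isClosed.closure_subset ?_⟩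
  refine mem_closure_iff_nhds.2 fun u hu => ?_
  obtain ⟨l, hlx, hlu⟩ := exists_Ioc_subset_of_mem_nhds hu (exists_lt x)
  obtain ⟨g, hgK, hg1, hgx⟩ := ψ.exists_mem_one_lt_lt hψ hinj hK (one_lt_div'.2 hlx)
  -- `ψ g ^ n ≤ x < ψ g ^ (n + 1)` and `ψ g < x / l` put `ψ g ^ n` in `Ioc l x`
  obtain ⟨n, hnx, hxn⟩ := exists_nat_pow_near (R := ℝ) (Subtype.coe_le_coe.2 hx.1) hg1
  have hnx : ψ g ^ n ≤ x := by rw [← Subtype.coe_le_coe]; simpa using hnx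
  have hxn : x < ψ g ^ n * ψ g := by rw [← Subtype.coe_lt_coe]; simpa [pow_succ] using hxn
  refine ⟨ψ (g ^ n), hlu ⟨?_, ?_⟩, mem_image_of_mem ψ
    (ψ.pow_mem_of_mul_mem (mem_of_mem_nhds hK) hKK hgK hg1.le n (hnx.trans_lt hx.2))⟩
    <;> rw [map_pow]
  exacts [(lt_div_comm.1 hgx).trans (div_lt_iff_lt_mul.2 hxn), hnx]

theorem MonoidHom.image_mem_nhds_one {Q : Type*} [Group Q] [TopologicalSpace Q]
    [IsTopologicalGroup Q] [(𝓝[≠] (1 : Q)).NeBot] {ψ : Q →* ℝ>0} (hψ : Continuous ψ)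
    (hinj : Injective ψ) {K : Set Q} (hKc : IsCompact K) (hK : K ∈ 𝓝 1) :
    ψ '' K ∈ 𝓝 1 := by
  obtain ⟨c, hc, hcK⟩ := ψ.exists_Ico_one_subset_image hψ hinj hKc hK
  obtain ⟨c', hc', hcK'⟩ :=
    ψ⁻¹.exists_Ico_one_subset_image hψ.inv (inv_injective.comp hinj) hKc hK
  refine mem_of_superset (Ioo_mem_nhds (inv_lt_one'.2 hc') hc) fun y hy => ?_
  rcases le_or_gt 1 y with hy1 | hy1
  · exact hcK ⟨hy1, hy.2⟩
  · obtain ⟨q, hqK, hq⟩ := hcK' ⟨one_le_inv'.2 hy1.le, inv_lt'.1 hy.1⟩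
    exact ⟨q, hqK, inv_injective hq⟩

theorem MonoidHom.isOpenMap_of_injective {Q : Type*} [Group Q] [TopologicalSpace Q]
    [IsTopologicalGroup Q] [LocallyCompactSpace Q] [(𝓝[≠] (1 : Q)).NeBot] {ψ : Q →* ℝ>0}
    (hψ : Continuous ψ) (hinj : Injective ψ) : IsOpenMap ψ :=
  IsTopologicalGroup.isOpenMap_iff_nhds_one.2 <| le_map fun V hV => by
    obtain ⟨K, hK, hKV, hKc⟩ := LocallyCompactSpace.local_compact_nhds 1 V hV
    exact mem_of_superset (ψ.image_mem_nhds_one hψ hinj hKc hK) (image_mono hKV)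

theorem MonoidHom.surjective_of_isOpenMap {G H : Type*} [Group G] [TopologicalSpace G] [Group H]
    [TopologicalSpace H] [ContinuousMul H] [PreconnectedSpace H] {ψ : G →* H}
    (hψ : IsOpenMap ψ) :
    Surjective ψ := by
  have hopen : IsOpen (ψ.range : Set H) := ψ.coe_range ▸ hψ.isOpen_range
  have := IsClopen.eq_univ ⟨ψ.range.isClosed_of_isOpen hopen, hopen⟩ ⟨1, ψ.range.one_mem⟩
  exact fun y => ψ.mem_range.1 (eq_univ_iff_forall.1 this y)

theorem MonoidHom.surjective_and_isOpenMap_of_not_isOpen_ker {G : Type*} [Group G]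
    [TopologicalSpace G] [IsTopologicalGroup G] [LocallyCompactSpace G] {π : G →* ℝ>0}
    (hπ : Continuous π) (hker : ¬ IsOpen (π.ker : Set G)) :
    Surjective π ∧ IsOpenMap π := by
  have : (𝓝[≠] (1 : G ⧸ π.ker)).NeBot := neBot_iff.2 fun h => hker <|
    QuotientGroup.discreteTopology_iff.1 <| discreteTopology_iff_isOpen_singleton_one.2 <|
      (isOpen_singleton_iff_punctured_nhds 1).2 h
  have hj : IsOpenMap (QuotientGroup.kerLift π) :=
    MonoidHom.isOpenMap_of_injective ((QuotientGroup.isQuotientMap_mk _).continuous_iff.2 hπ)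
      (QuotientGroup.kerLift_injective π)
  exact ⟨(MonoidHom.surjective_of_isOpenMap hj).comp QuotientGroup.mk_surjective,
    hj.comp QuotientGroup.isOpenMap_coe⟩

/-- Dichotomy: for a continuous homomorphism `π : G → (ℝ>0, ×)` from a locally compact
group, exactly one of the following holds: `π` is a surjective open map (so it is a
quotient map of topological groups), or `ker π` is an open subgroup of `G`. -/
theorem stmt15 {G : Type*} [Group G] [TopologicalSpace G] [IsTopologicalGroup G]
    [LocallyCompactSpace G]
    (π : G →* {x : ℝ // 0 < x}) (hπ : Continuous π) :
    Xor' (Function.Surjective π ∧ IsOpenMap π) (IsOpen ((π.ker : Subgroup G) : Set G)) := by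
  refine xor_iff_iff_not.2 ⟨fun ⟨hsurj, hopen⟩ hker => ?_,
    π.surjective_and_isOpenMap_of_not_isOpen_ker hπ⟩
  have := hopen _ hker
  rw [MonoidHom.coe_ker, image_preimage_eq _ hsurj] at this
  exact not_isOpen_singleton 1 this
end

section
/- Let G be a locally compact group, G' an open normal subgroup of G which is unimodular with Haar measure μ_{G'}, and suppose G' satisfies the Brunn–Minkowski inequality with exponent n ≥ 1: μ_{G'}(AB)^{1/n} ≥ μ_{G'}(A)^{1/n} + μ_{G'}(B)^{1/n} for all compact A, B ⊆ G' of positive measure. Then G satisfies the two-sided Brunn–Minkowski inequality with exponent n: for a left Haar measure μ and right Haar measure ν on G and all compact X, Y ⊆ G of positive measure, (ν(X)/ν(XY))^{1/n} + (μ(Y)/μ(XY))^{1/n} ≤ 1. -/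
/-!
Since `G'` is open, `G ⧸ G'` is discrete, so a compact set meets only finitely many cosets.
Write `X ∩ qG' = a_q A_q` and `Y ∩ G'r = B_r b_r` with `A_q, B_r ⊆ G'` compact. By uniqueness of
Haar measure on `G'`, `s ↦ ν (a s)` and `s ↦ μ (s b)` are multiples of `μ_{G'}`. Pick `p, r`
maximising `μ_{G'} A_p` and `μ_{G'} B_r`, with `n`-th roots `α, β`. For every `q`, Brunn–Minkowski
for `A_q B_r` and `μ_{G'} A_q ≤ α ^ n` give `ν (X ∩ qG') (α + β) ^ n ≤ α ^ n ν (XY ∩ qrG')`; the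
cosets `qrG'` are disjoint, so `ν X (α + β) ^ n ≤ α ^ n ν (XY)`, and symmetrically
`μ Y (α + β) ^ n ≤ β ^ n μ (XY)`. Taking `n`-th roots bounds the two ratios by `α / (α + β)` and
`β / (α + β)`.
-/

open MeasureTheory Measure Pointwise
open scoped ENNReal NNReal

def IsBrunnMinkowski {H : Type*} [Mul H] [TopologicalSpace H] [MeasurableSpace H]
    (μ : Measure H) (n : ℕ) : Prop :=
  ∀ A B : Set H, IsCompact A → IsCompact B → 0 < μ A → 0 < μ B →
    μ A ^ ((1 : ℝ) / n) + μ B ^ ((1 : ℝ) / n) ≤ μ (A * B) ^ ((1 : ℝ) / n)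

theorem IsBrunnMinkowski.add_pow_le {H : Type*} [Mul H] [TopologicalSpace H] [MeasurableSpace H]
    {μ : Measure H} {n : ℕ} (h : IsBrunnMinkowski μ n) (hn : n ≠ 0) {A B : Set H}
    (hA : IsCompact A) (hB : IsCompact B) (hA₀ : 0 < μ A) (hB₀ : 0 < μ B) :
    (μ A ^ ((1 : ℝ) / n) + μ B ^ ((1 : ℝ) / n)) ^ n ≤ μ (A * B) :=
  calc _ ≤ (μ (A * B) ^ ((1 : ℝ) / n)) ^ n := by gcongr; exact h A B hA hB hA₀ hB₀
    _ = μ (A * B) := by rw [one_div, ENNReal.rpow_inv_natCast_pow hn]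

theorem MeasureTheory.measure_mul_le_mul_of_forall_inter {α ι : Type*} [MeasurableSpace α]
    (ρ : Measure α) {X Z : Set α} {S : Finset ι} {P Q : ι → Set α}
    (hX : X ⊆ ⋃ i ∈ S, P i) (hQ : ∀ i ∈ S, MeasurableSet (Q i))
    (hQd : (S : Set ι).PairwiseDisjoint Q) {c d : ℝ≥0∞}
    (h : ∀ i ∈ S, ρ (X ∩ P i) * c ≤ d * ρ (Z ∩ Q i)) : ρ X * c ≤ d * ρ Z := by
  have hcover : X ⊆ ⋃ i ∈ S, X ∩ P i :=
    (Set.subset_inter subset_rfl hX).trans (Set.inter_iUnion₂ X _).subset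
  calc ρ X * c ≤ (∑ i ∈ S, ρ (X ∩ P i)) * c := by
        gcongr
        exact (measure_mono hcover).trans (measure_biUnion_finset_le S _)
    _ ≤ ∑ i ∈ S, d * ρ (Z ∩ Q i) := by
        rw [Finset.sum_mul]
        exact Finset.sum_le_sum h
    _ = d * ρ.restrict Z (⋃ i ∈ S, Q i) := by
        rw [measure_biUnion_finset hQd hQ, Finset.mul_sum]
        refine Finset.sum_congr rfl fun i hi => ?_
        rw [restrict_apply (hQ i hi), Set.inter_comm]
    _ ≤ d * ρ Z := by
        gcongr d * ?_
        exact (measure_mono (Set.subset_univ _)).trans_eq (restrict_apply_univ Z)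

theorem MeasureTheory.exists_measure_inter_pos {α ι : Type*} [MeasurableSpace α]
    (ρ : Measure α) {X : Set α} {S : Finset ι} {P : ι → Set α}
    (hX : X ⊆ ⋃ i ∈ S, P i) (hpos : 0 < ρ X) : ∃ i ∈ S, 0 < ρ (X ∩ P i) := by
  by_contra! h
  have hcover : X ⊆ ⋃ i ∈ S, X ∩ P i :=
    (Set.subset_inter subset_rfl hX).trans (Set.inter_iUnion₂ X _).subset
  refine hpos.ne' (measure_mono_null hcover ?_)
  exact (measure_biUnion_null_iff S.countable_toSet).2 fun i hi => nonpos_iff_eq_zero.1 (h i hi)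

theorem ENNReal.mul_mul_add_pow_le {n : ℕ} (hn : n ≠ 0) {c s t a w : ℝ≥0∞}
    (hs : s ^ ((1 : ℝ) / n) ≤ a) (ht : 0 < s → (s ^ ((1 : ℝ) / n) + w) ^ n ≤ t) :
    c * s * (a + w) ^ n ≤ a ^ n * (c * t) := by
  rcases eq_zero_or_pos s with rfl | hs₀
  · simp
  have hu : (s ^ ((1 : ℝ) / n)) ^ n = s := by rw [one_div, ENNReal.rpow_inv_natCast_pow hn]
  set u := s ^ ((1 : ℝ) / n)
  have hua : u * (a + w) ≤ a * (u + w) := by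
    rw [mul_add, mul_add, mul_comm u a]
    gcongr
  calc c * s * (a + w) ^ n = c * (u * (a + w)) ^ n := by rw [mul_pow, hu, mul_assoc]
    _ ≤ c * (a * (u + w)) ^ n := by gcongr
    _ = a ^ n * (c * (u + w) ^ n) := by rw [mul_pow]; ring
    _ ≤ a ^ n * (c * t) := by gcongr; exact ht hs₀

theorem ENNReal.rpow_div_add_rpow_div_le_one {n : ℕ} (hn : n ≠ 0) {x y u v a b : ℝ≥0∞}
    (ha : a ≠ ∞) (hb : b ≠ ∞) (hab : a + b ≠ 0)
    (hx : x * (a + b) ^ n ≤ a ^ n * u) (hy : y * (a + b) ^ n ≤ b ^ n * v) :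
    (x / u) ^ ((1 : ℝ) / n) + (y / v) ^ ((1 : ℝ) / n) ≤ 1 := by
  have hD₀ : (a + b) ^ n ≠ 0 := pow_ne_zero n hab
  have hD : (a + b) ^ n ≠ ∞ := ENNReal.pow_ne_top (ENNReal.add_ne_top.2 ⟨ha, hb⟩)
  have key : ∀ {x u c : ℝ≥0∞}, x * (a + b) ^ n ≤ c ^ n * u →
      (x / u) ^ ((1 : ℝ) / n) ≤ c / (a + b) := by
    intro x u c h
    have hxu : x / u ≤ (c / (a + b)) ^ n := by
      rw [div_eq_mul_inv c, mul_pow, ← ENNReal.inv_pow, ← div_eq_mul_inv]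
      refine ENNReal.div_le_of_le_mul ?_
      rw [← ENNReal.mul_div_right_comm]
      exact (ENNReal.le_div_iff_mul_le (Or.inl hD₀) (Or.inl hD)).2 h
    calc (x / u) ^ ((1 : ℝ) / n) ≤ ((c / (a + b)) ^ n) ^ ((1 : ℝ) / n) := by gcongr
      _ = c / (a + b) := by rw [one_div, ENNReal.pow_rpow_inv_natCast hn]
  calc (x / u) ^ ((1 : ℝ) / n) + (y / v) ^ ((1 : ℝ) / n) ≤ a / (a + b) + b / (a + b) :=
        add_le_add (key hx) (key hy)
    _ = 1 := by
        rw [ENNReal.div_add_div_same, ENNReal.div_self hab (ENNReal.add_ne_top.2 ⟨ha, hb⟩)]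

section Haar

variable {G : Type*} [Group G] [TopologicalSpace G] [IsTopologicalGroup G] [LocallyCompactSpace G]
  [MeasurableSpace G] [BorelSpace G]

theorem exists_measure_isMulRightInvariant_eq_smul (ν μ : Measure G) [μ.IsHaarMeasure]
    [μ.IsMulRightInvariant] [IsFiniteMeasureOnCompacts ν] [ν.IsMulRightInvariant] :
    ∃ c : ℝ≥0, ∀ s : Set G, IsCompact s → ν s = c * μ s := by
  have : μ.inv.IsHaarMeasure := ⟨⟩
  refine ⟨haarScalarFactor ν.inv μ.inv, fun s hs => ?_⟩
  have hs' : IsCompact (closure s⁻¹) := by rw [← inv_closure]; exact hs.closure.inv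
  simpa [inv_apply] using measure_isMulInvariant_eq_smul_of_isCompact_closure ν.inv μ.inv hs'

variable {H : Subgroup G} (hH : IsOpen (H : Set G)) (μH : Measure H) [μH.IsHaarMeasure]
include hH

theorem exists_measure_image_val_mul_singleton_eq_smul (μ : Measure G) [μ.IsMulLeftInvariant]
    [IsFiniteMeasureOnCompacts μ] (b : G) :
    ∃ c : ℝ≥0, ∀ s : Set H, IsCompact s → μ (Subtype.val '' s * {b}) = c * μH s := by
  have : LocallyCompactSpace H := hH.isLocallyClosed.locallyCompactSpace
  have hemb : MeasurableEmbedding H.subtype := .subtype_coe hH.measurableSet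
  have : IsFiniteMeasureOnCompacts (μ.map (· * b⁻¹)) :=
    IsFiniteMeasureOnCompacts.map μ (Homeomorph.mulRight b⁻¹)
  let ρ := (μ.map (· * b⁻¹)).comap H.subtype
  have : ρ.IsMulLeftInvariant := IsMulLeftInvariant.comap _ hemb
  have : IsFiniteMeasureOnCompacts ρ := .comap' _ continuous_subtype_val hemb
  refine ⟨haarScalarFactor ρ μH, fun s hs => ?_⟩
  have h := measure_isMulInvariant_eq_smul_of_isCompact_closure ρ μH hs.closure
  rw [hemb.comap_apply, ← MeasurableEquiv.coe_mulRight, MeasurableEquiv.map_apply,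
    MeasurableEquiv.coe_mulRight, ← Set.image_mul_right] at h
  rw [Set.mul_singleton]
  exact h

theorem exists_measure_smul_image_val_eq_smul [μH.IsMulRightInvariant] (ν : Measure G)
    [ν.IsMulRightInvariant] [IsFiniteMeasureOnCompacts ν] (a : G) :
    ∃ c : ℝ≥0, ∀ s : Set H, IsCompact s → ν (a • Subtype.val '' s) = c * μH s := by
  have : LocallyCompactSpace H := hH.isLocallyClosed.locallyCompactSpace
  have hemb : MeasurableEmbedding H.subtype := .subtype_coe hH.measurableSet
  have : IsFiniteMeasureOnCompacts (ν.map (a⁻¹ * ·)) :=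
    IsFiniteMeasureOnCompacts.map ν (Homeomorph.mulLeft a⁻¹)
  let ρ := (ν.map (a⁻¹ * ·)).comap H.subtype
  have : ρ.IsMulRightInvariant := IsMulRightInvariant.comap _ hemb
  have : IsFiniteMeasureOnCompacts ρ := .comap' _ continuous_subtype_val hemb
  obtain ⟨c, hc⟩ := exists_measure_isMulRightInvariant_eq_smul ρ μH
  refine ⟨c, fun s hs => ?_⟩
  rw [← hc s hs, hemb.comap_apply, ← MeasurableEquiv.coe_mulLeft, MeasurableEquiv.map_apply,
    MeasurableEquiv.coe_mulLeft, ← Set.preimage_smul_inv]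
  rfl

end Haar

section Cosets

variable {G : Type*} [Group G] (N : Subgroup G)

def leftSlice (X : Set G) (q : G ⧸ N) : Set N := (fun x : N => q.out * (x : G)) ⁻¹' X

def rightSlice (Y : Set G) (r : G ⧸ N) : Set N := (fun y : N => (y : G) * r.out) ⁻¹' Y

theorem range_mul_subtype_val (a : G) :
    Set.range (fun x : N => a * (x : G)) = QuotientGroup.mk ⁻¹' {(a : G ⧸ N)} := by
  ext x
  refine ⟨?_, fun hx => ⟨⟨a⁻¹ * x, QuotientGroup.eq.1 hx.symm⟩, mul_inv_cancel_left a x⟩⟩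
  rintro ⟨y, rfl⟩
  exact QuotientGroup.mk_mul_of_mem a y.2

theorem range_subtype_val_mul [N.Normal] (b : G) :
    Set.range (fun y : N => (y : G) * b) = QuotientGroup.mk ⁻¹' {(b : G ⧸ N)} := by
  ext x
  refine ⟨?_, fun hx => ⟨⟨x * b⁻¹, ?_⟩, inv_mul_cancel_right x b⟩⟩
  · rintro ⟨y, rfl⟩
    simp [(QuotientGroup.eq_one_iff (N := N) y).2 y.2]
  · have hx : (x : G ⧸ N) = b := hx
    rw [← QuotientGroup.eq_one_iff, QuotientGroup.mk_mul, QuotientGroup.mk_inv, hx,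
      mul_inv_cancel]

theorem inter_preimage_mk_eq_smul (X : Set G) (q : G ⧸ N) :
    X ∩ QuotientGroup.mk ⁻¹' {q} = q.out • (Subtype.val '' leftSlice N X q) := by
  calc X ∩ QuotientGroup.mk ⁻¹' {q} = X ∩ Set.range (fun x : N => q.out * (x : G)) := by
        rw [range_mul_subtype_val, QuotientGroup.out_eq']
    _ = _ := Set.image_preimage_eq_inter_range.symm
    _ = _ := by rw [← Set.image_smul, ← Set.image_comp]; rfl

theorem inter_preimage_mk_eq_mul_singleton [N.Normal] (Y : Set G) (r : G ⧸ N) :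
    Y ∩ QuotientGroup.mk ⁻¹' {r} = Subtype.val '' rightSlice N Y r * {r.out} := by
  calc Y ∩ QuotientGroup.mk ⁻¹' {r} = Y ∩ Set.range (fun y : N => (y : G) * r.out) := by
        rw [range_subtype_val_mul, QuotientGroup.out_eq']
    _ = _ := Set.image_preimage_eq_inter_range.symm
    _ = _ := by rw [Set.mul_singleton, ← Set.image_comp]; rfl

theorem inter_preimage_mk_mul_inter_preimage_mk [N.Normal] (X Y : Set G) (q r : G ⧸ N) :
    (X ∩ QuotientGroup.mk ⁻¹' {q}) * (Y ∩ QuotientGroup.mk ⁻¹' {r}) =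
      q.out • (Subtype.val '' (leftSlice N X q * rightSlice N Y r) * {r.out}) := by
  have hval : (Subtype.val '' (leftSlice N X q * rightSlice N Y r) : Set G) =
      Subtype.val '' leftSlice N X q * Subtype.val '' rightSlice N Y r :=
    Set.image_mul N.subtype
  rw [inter_preimage_mk_eq_smul, inter_preimage_mk_eq_mul_singleton, hval, smul_mul_assoc,
    mul_assoc]

theorem inter_preimage_mk_mul_inter_preimage_mk_subset [N.Normal] (X Y : Set G) (q r : G ⧸ N) :
    (X ∩ QuotientGroup.mk ⁻¹' {q}) * (Y ∩ QuotientGroup.mk ⁻¹' {r}) ⊆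
      X * Y ∩ QuotientGroup.mk ⁻¹' {q * r} := by
  rintro _ ⟨x, ⟨hx, rfl⟩, y, ⟨hy, rfl⟩, rfl⟩
  exact ⟨Set.mul_mem_mul hx hy, rfl⟩

end Cosets

section OpenSubgroup

variable {G : Type*} [Group G] [TopologicalSpace G] [IsTopologicalGroup G] {N : Subgroup G}
  (hN : IsOpen (N : Set G))
include hN

theorem IsCompact.leftSlice {X : Set G} (hX : IsCompact X) (q : G ⧸ N) :
    IsCompact (leftSlice N X q) :=
  ((Homeomorph.mulLeft q.out).isClosedEmbedding.comp
    (N.isClosed_of_isOpen hN).isClosedEmbedding_subtypeVal).isCompact_preimage hX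

theorem IsCompact.rightSlice {Y : Set G} (hY : IsCompact Y) (r : G ⧸ N) :
    IsCompact (rightSlice N Y r) :=
  ((Homeomorph.mulRight r.out).isClosedEmbedding.comp
    (N.isClosed_of_isOpen hN).isClosedEmbedding_subtypeVal).isCompact_preimage hY

theorem isOpen_preimage_mk_singleton (q : G ⧸ N) :
    IsOpen (QuotientGroup.mk ⁻¹' {q} : Set G) :=
  have := QuotientGroup.discreteTopology hN
  (isOpen_discrete {q}).preimage QuotientGroup.continuous_mk

theorem IsCompact.exists_finset_subset_biUnion_preimage_mk {X : Set G} (hX : IsCompact X) :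
    ∃ S : Finset (G ⧸ N), X ⊆ ⋃ q ∈ S, QuotientGroup.mk ⁻¹' {q} := by
  have := QuotientGroup.discreteTopology hN
  refine ⟨(hX.image QuotientGroup.continuous_mk).finite_of_discrete.toFinset, fun x hx => ?_⟩
  simp only [Set.Finite.mem_toFinset, Set.mem_iUnion]
  exact ⟨x, Set.mem_image_of_mem _ hx, rfl⟩

end OpenSubgroup

section Fibers

variable {G : Type*} [Group G] [TopologicalSpace G] [IsTopologicalGroup G] [LocallyCompactSpace G]
  [MeasurableSpace G] [BorelSpace G] {N : Subgroup G} (hN : IsOpen (N : Set G))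
  (μN : Measure N) [μN.IsHaarMeasure] {X Y : Set G}
include hN

theorem exists_pos_measure_leftSlice [μN.IsMulRightInvariant] (ν : Measure G)
    [ν.IsMulRightInvariant] [IsFiniteMeasureOnCompacts ν] (hX : IsCompact X)
    {S : Finset (G ⧸ N)} (hS : X ⊆ ⋃ q ∈ S, QuotientGroup.mk ⁻¹' {q}) (hνX : 0 < ν X) :
    ∃ q ∈ S, 0 < μN (leftSlice N X q) := by
  obtain ⟨q, hqS, hpos⟩ := exists_measure_inter_pos ν hS hνX
  obtain ⟨c, hc⟩ := exists_measure_smul_image_val_eq_smul hN μN ν q.out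
  rw [inter_preimage_mk_eq_smul, hc _ (hX.leftSlice hN q)] at hpos
  exact ⟨q, hqS, (ENNReal.mul_pos_iff.1 hpos).2⟩

theorem exists_pos_measure_rightSlice [N.Normal] (μ : Measure G) [μ.IsMulLeftInvariant]
    [IsFiniteMeasureOnCompacts μ] (hY : IsCompact Y) {T : Finset (G ⧸ N)}
    (hT : Y ⊆ ⋃ r ∈ T, QuotientGroup.mk ⁻¹' {r}) (hμY : 0 < μ Y) :
    ∃ r ∈ T, 0 < μN (rightSlice N Y r) := by
  obtain ⟨r, hrT, hpos⟩ := exists_measure_inter_pos μ hT hμY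
  obtain ⟨c, hc⟩ := exists_measure_image_val_mul_singleton_eq_smul hN μN μ r.out
  rw [inter_preimage_mk_eq_mul_singleton, hc _ (hY.rightSlice hN r)] at hpos
  exact ⟨r, hrT, (ENNReal.mul_pos_iff.1 hpos).2⟩

variable [N.Normal] {n : ℕ} (hBM : IsBrunnMinkowski μN n) (hn : n ≠ 0)
include hBM hn

theorem measure_mul_add_pow_le_of_isMulRightInvariant [μN.IsMulRightInvariant] (ν : Measure G)
    [ν.IsMulRightInvariant] [IsFiniteMeasureOnCompacts ν] (hX : IsCompact X) (hY : IsCompact Y)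
    {S : Finset (G ⧸ N)} (hS : X ⊆ ⋃ q ∈ S, QuotientGroup.mk ⁻¹' {q}) {a : ℝ≥0∞}
    (ha : ∀ q ∈ S, μN (leftSlice N X q) ^ ((1 : ℝ) / n) ≤ a) {r : G ⧸ N}
    (hr : 0 < μN (rightSlice N Y r)) :
    ν X * (a + μN (rightSlice N Y r) ^ ((1 : ℝ) / n)) ^ n ≤ a ^ n * ν (X * Y) := by
  refine measure_mul_le_mul_of_forall_inter ν hS
    (fun q _ => (isOpen_preimage_mk_singleton hN (q * r)).measurableSet)
    (fun q _ q' _ hqq' => (Set.disjoint_singleton.2 ((mul_left_injective r).ne hqq')).preimage _)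
    fun q hqS => ?_
  obtain ⟨c, hc⟩ := exists_measure_smul_image_val_eq_smul hN μN ν q.out
  have hA := hX.leftSlice hN q
  have hB := hY.rightSlice hN r
  calc ν (X ∩ QuotientGroup.mk ⁻¹' {q}) * (a + μN (rightSlice N Y r) ^ ((1 : ℝ) / n)) ^ n
        = c * μN (leftSlice N X q) * (a + μN (rightSlice N Y r) ^ ((1 : ℝ) / n)) ^ n := by
          rw [inter_preimage_mk_eq_smul, hc _ hA]
    _ ≤ a ^ n * (c * μN (leftSlice N X q * rightSlice N Y r)) :=
          ENNReal.mul_mul_add_pow_le hn (ha q hqS) fun hq => hBM.add_pow_le hn hA hB hq hr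
    _ = a ^ n * ν ((X ∩ QuotientGroup.mk ⁻¹' {q}) * (Y ∩ QuotientGroup.mk ⁻¹' {r})) := by
          rw [inter_preimage_mk_mul_inter_preimage_mk, ← smul_mul_assoc, Set.mul_singleton,
            Set.image_mul_right, measure_preimage_mul_right, hc _ (hA.mul hB)]
    _ ≤ a ^ n * ν (X * Y ∩ QuotientGroup.mk ⁻¹' {q * r}) := by
          gcongr
          exact inter_preimage_mk_mul_inter_preimage_mk_subset N X Y q r

theorem measure_mul_add_pow_le_of_isMulLeftInvariant (μ : Measure G) [μ.IsMulLeftInvariant]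
    [IsFiniteMeasureOnCompacts μ] (hX : IsCompact X) (hY : IsCompact Y)
    {T : Finset (G ⧸ N)} (hT : Y ⊆ ⋃ r ∈ T, QuotientGroup.mk ⁻¹' {r}) {b : ℝ≥0∞}
    (hb : ∀ r ∈ T, μN (rightSlice N Y r) ^ ((1 : ℝ) / n) ≤ b) {q : G ⧸ N}
    (hq : 0 < μN (leftSlice N X q)) :
    μ Y * (μN (leftSlice N X q) ^ ((1 : ℝ) / n) + b) ^ n ≤ b ^ n * μ (X * Y) := by
  refine measure_mul_le_mul_of_forall_inter μ hT
    (fun r _ => (isOpen_preimage_mk_singleton hN (q * r)).measurableSet)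
    (fun r _ r' _ hrr' => (Set.disjoint_singleton.2 ((mul_right_injective q).ne hrr')).preimage _)
    fun r hrT => ?_
  obtain ⟨c, hc⟩ := exists_measure_image_val_mul_singleton_eq_smul hN μN μ r.out
  have hA := hX.leftSlice hN q
  have hB := hY.rightSlice hN r
  calc μ (Y ∩ QuotientGroup.mk ⁻¹' {r}) * (μN (leftSlice N X q) ^ ((1 : ℝ) / n) + b) ^ n
        = c * μN (rightSlice N Y r) * (b + μN (leftSlice N X q) ^ ((1 : ℝ) / n)) ^ n := by
          rw [inter_preimage_mk_eq_mul_singleton, hc _ hB, add_comm]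
    _ ≤ b ^ n * (c * μN (leftSlice N X q * rightSlice N Y r)) :=
          ENNReal.mul_mul_add_pow_le hn (hb r hrT) fun hr => by
            rw [add_comm]
            exact hBM.add_pow_le hn hA hB hq hr
    _ = b ^ n * μ ((X ∩ QuotientGroup.mk ⁻¹' {q}) * (Y ∩ QuotientGroup.mk ⁻¹' {r})) := by
          rw [inter_preimage_mk_mul_inter_preimage_mk, measure_smul, hc _ (hA.mul hB)]
    _ ≤ b ^ n * μ (X * Y ∩ QuotientGroup.mk ⁻¹' {q * r}) := by
          gcongr
          exact inter_preimage_mk_mul_inter_preimage_mk_subset N X Y q r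

end Fibers

theorem stmt16_general {G : Type*} [Group G] [TopologicalSpace G] [IsTopologicalGroup G]
    [LocallyCompactSpace G] [MeasurableSpace G] [BorelSpace G]
    (μ ν : Measure G) [μ.IsHaarMeasure]
    [ν.IsMulRightInvariant] [IsFiniteMeasureOnCompacts ν]
    (G' : Subgroup G) (hG'open : IsOpen (G' : Set G)) [G'.Normal]
    (μG' : Measure G') [μG'.IsHaarMeasure] [μG'.IsMulRightInvariant]
    (n : ℕ) (hn : 1 ≤ n)
    (hBM : ∀ A B : Set G', IsCompact A → IsCompact B → 0 < μG' A → 0 < μG' B →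
      μG' A ^ ((1 : ℝ) / n) + μG' B ^ ((1 : ℝ) / n) ≤ μG' (A * B) ^ ((1 : ℝ) / n)) :
    ∀ X Y : Set G, IsCompact X → IsCompact Y →
      0 < μ X → 0 < μ Y → 0 < ν X → 0 < ν Y →
      (ν X / ν (X * Y)) ^ ((1 : ℝ) / n) + (μ Y / μ (X * Y)) ^ ((1 : ℝ) / n) ≤ 1 := by
  intro X Y hX hY _ hμY hνX _
  have hn₀ : n ≠ 0 := by omega
  have hn_inv : (0 : ℝ) ≤ 1 / n := by positivity
  obtain ⟨S, hS⟩ := hX.exists_finset_subset_biUnion_preimage_mk hG'open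
  obtain ⟨T, hT⟩ := hY.exists_finset_subset_biUnion_preimage_mk hG'open
  obtain ⟨q₀, hq₀S, hq₀⟩ := exists_pos_measure_leftSlice hG'open μG' ν hX hS hνX
  obtain ⟨r₀, hr₀T, hr₀⟩ := exists_pos_measure_rightSlice hG'open μG' μ hY hT hμY
  obtain ⟨q, -, hq⟩ := S.exists_max_image (fun q => μG' (leftSlice G' X q)) ⟨q₀, hq₀S⟩
  obtain ⟨r, -, hr⟩ := T.exists_max_image (fun r => μG' (rightSlice G' Y r)) ⟨r₀, hr₀T⟩
  have hα := hq₀.trans_le (hq q₀ hq₀S)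
  have hβ := hr₀.trans_le (hr r₀ hr₀T)
  have hα_top := (hX.leftSlice hG'open q).measure_lt_top (μ := μG').ne
  refine ENNReal.rpow_div_add_rpow_div_le_one hn₀
    (ENNReal.rpow_ne_top_of_nonneg hn_inv hα_top)
    (ENNReal.rpow_ne_top_of_nonneg hn_inv (hY.rightSlice hG'open r).measure_lt_top.ne)
    (fun h => (ENNReal.rpow_pos hα hα_top).ne' (add_eq_zero.1 h).1)
    (measure_mul_add_pow_le_of_isMulRightInvariant hG'open μG' hBM hn₀ ν hX hY hS
      (fun q' hq' => ENNReal.rpow_le_rpow (hq q' hq') hn_inv) hβ)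
    (measure_mul_add_pow_le_of_isMulLeftInvariant hG'open μG' hBM hn₀ μ hX hY hT
      (fun r' hr' => ENNReal.rpow_le_rpow (hr r' hr') hn_inv) hα)

/-- If a locally compact group `G` has an open normal unimodular subgroup `G'` satisfying
the Brunn–Minkowski inequality with exponent `n ≥ 1`, then `G` satisfies the two-sided
Brunn–Minkowski inequality with exponent `n`:
`(ν(X)/ν(XY))^{1/n} + (μ(Y)/μ(XY))^{1/n} ≤ 1`. -/
theorem stmt16 {G : Type*} [Group G] [TopologicalSpace G] [IsTopologicalGroup G]
    [LocallyCompactSpace G] [MeasurableSpace G] [BorelSpace G]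
    (μ ν : Measure G) [μ.IsHaarMeasure]
    [ν.IsMulRightInvariant] [IsFiniteMeasureOnCompacts ν] [ν.IsOpenPosMeasure]
    (G' : Subgroup G) (hG'open : IsOpen (G' : Set G)) [G'.Normal]
    (μG' : Measure G') [μG'.IsHaarMeasure] [μG'.IsMulRightInvariant]
    (n : ℕ) (hn : 1 ≤ n)
    (hBM : ∀ A B : Set G', IsCompact A → IsCompact B → 0 < μG' A → 0 < μG' B →
      μG' A ^ ((1 : ℝ) / n) + μG' B ^ ((1 : ℝ) / n) ≤ μG' (A * B) ^ ((1 : ℝ) / n)) :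
    ∀ X Y : Set G, IsCompact X → IsCompact Y →
      0 < μ X → 0 < μ Y → 0 < ν X → 0 < ν Y →
      (ν X / ν (X * Y)) ^ ((1 : ℝ) / n) + (μ Y / μ (X * Y)) ^ ((1 : ℝ) / n) ≤ 1 :=
  stmt16_general μ ν G' hG'open μG' n hn hBM
end
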